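/- Let P be a finite set of points and S a finite set of closed intervals on the real line such that ⋃S ⊇ P. Then there exists a subset S* ⊆ S covering P, minimizing the maximum weighted membership over points of P, such that no interval of S* is strictly contained in the interior extent of another interval of S* (no interval [a,b] ∈ S* with [a',b'] ∈ S* satisfying a' < a and b < b'), and no point of the real line lies in more than two intervals of S*. -/

import Mathlib

/-!
Take a cover minimizing the maximum weighted membership, and inside it an inclusion-minimal
subcover. Since the weights are positive, discarding intervals never increases the membership,
so the subcover is still optimal. Minimality does the rest: a dominated interval is redundant,
and if a point lies in three intervals of the cover, the one that is neither the leftmost-starting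
nor the rightmost-ending is contained in the union of those two, hence redundant as well.
-/

open scoped Classical

open Finset

def CoversPoints (P : Finset ℝ) (T : Finset (ℝ × ℝ)) : Prop :=
  ∀ p ∈ P, ∃ s ∈ T, p ∈ Set.Icc s.1 s.2

noncomputable def membership (w : ℝ × ℝ → ℝ) (T : Finset (ℝ × ℝ)) (p : ℝ) : ℝ :=
  ∑ s ∈ T.filter (fun s => p ∈ Set.Icc s.1 s.2), w s

noncomputable def maxMembership (P : Finset ℝ) (w : ℝ × ℝ → ℝ) (T : Finset (ℝ × ℝ)) : ℝ :=
  sSup (membership w T '' ↑P)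

section Monotone

variable {w : ℝ × ℝ → ℝ} {A B : Finset (ℝ × ℝ)}

lemma membership_mono (hAB : A ⊆ B) (hw : ∀ s ∈ B, 0 ≤ w s) (p : ℝ) :
    membership w A p ≤ membership w B p :=
  sum_le_sum_of_subset_of_nonneg (filter_subset_filter _ hAB)
    fun s hs _ => hw s (mem_filter.1 hs).1

lemma maxMembership_mono (P : Finset ℝ) (hAB : A ⊆ B) (hw : ∀ s ∈ B, 0 ≤ w s) :
    maxMembership P w A ≤ maxMembership P w B := by
  rcases P.eq_empty_or_nonempty with rfl | hP
  · simp [maxMembership]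
  refine csSup_le ((coe_nonempty.2 hP).image _) ?_
  rintro _ ⟨p, hp, rfl⟩
  exact (membership_mono hAB hw p).trans
    (le_csSup (P.finite_toSet.image _).bddAbove ⟨p, hp, rfl⟩)

end Monotone

namespace CoversPoints

variable {P : Finset ℝ} {T : Finset (ℝ × ℝ)}

lemma erase_of_forall_mem {t : ℝ × ℝ} (hT : CoversPoints P T)
    (ht : ∀ q ∈ Set.Icc t.1 t.2, ∃ s ∈ T.erase t, q ∈ Set.Icc s.1 s.2) :
    CoversPoints P (T.erase t) := by
  intro q hq
  obtain ⟨s, hs, hqs⟩ := hT q hq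
  by_cases hst : s = t
  · exact ht q (hst ▸ hqs)
  · exact ⟨s, mem_erase.2 ⟨hst, hs⟩, hqs⟩

lemma erase_of_dominated {s r : ℝ × ℝ} (hT : CoversPoints P T) (hr : r ∈ T) (hrs : r ≠ s)
    (h₁ : r.1 ≤ s.1) (h₂ : s.2 ≤ r.2) : CoversPoints P (T.erase s) :=
  hT.erase_of_forall_mem fun _ hq => ⟨r, mem_erase.2 ⟨hrs, hr⟩, h₁.trans hq.1, hq.2.trans h₂⟩

lemma exists_erase_of_two_lt_card {p : ℝ} (hT : CoversPoints P T)
    (hp : 2 < (T.filter (fun s => p ∈ Set.Icc s.1 s.2)).card) :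
    ∃ t ∈ T, CoversPoints P (T.erase t) := by
  set F := T.filter (fun s => p ∈ Set.Icc s.1 s.2)
  have hF : F.Nonempty := card_pos.1 (by omega)
  obtain ⟨u, hu, hu_min⟩ := F.exists_min_image (·.1) hF
  obtain ⟨v, hv, hv_max⟩ := F.exists_max_image (·.2) hF
  obtain ⟨t, ht, htu, htv⟩ : ∃ t ∈ F, t ≠ u ∧ t ≠ v := by
    by_contra! h
    have hsub : F ⊆ {u, v} := fun t ht => by
      rcases eq_or_ne t u with rfl | htu
      · simp
      · simp [h t ht htu]
    exact absurd ((card_le_card hsub).trans card_le_two) (by omega)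
  rw [mem_filter] at hu hv
  refine ⟨t, (mem_filter.1 ht).1, hT.erase_of_forall_mem fun q hq => ?_⟩
  -- `[t.1, t.2] ⊆ [u.1, p] ∪ [p, v.2]`
  rcases le_total q p with hqp | hpq
  · exact ⟨u, mem_erase.2 ⟨htu.symm, hu.1⟩, (hu_min t ht).trans hq.1, hqp.trans hu.2.2⟩
  · exact ⟨v, mem_erase.2 ⟨htv.symm, hv.1⟩, hv.2.1.trans hpq, hq.2.trans (hv_max t ht)⟩

end CoversPoints

section MinimalCover

variable {P : Finset ℝ} {T : Finset (ℝ × ℝ)}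

lemma not_dominated_of_minimal (hT : Minimal (CoversPoints P) T) :
    ¬ ∃ s ∈ T, ∃ r ∈ T, r.1 < s.1 ∧ s.2 < r.2 := by
  rintro ⟨s, hs, r, hr, h₁, h₂⟩
  exact hT.not_prop_of_lt (erase_ssubset hs)
    (hT.prop.erase_of_dominated hr (by rintro rfl; exact h₁.false) h₁.le h₂.le)

lemma card_filter_mem_Icc_le_two_of_minimal (hT : Minimal (CoversPoints P) T) (p : ℝ) :
    (T.filter (fun s => p ∈ Set.Icc s.1 s.2)).card ≤ 2 := by
  by_contra! hp
  obtain ⟨t, ht, htcov⟩ := hT.prop.exists_erase_of_two_lt_card hp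
  exact hT.not_prop_of_lt (erase_ssubset ht) htcov

end MinimalCover

theorem stmt7_general (P : Finset ℝ) (S : Finset (ℝ × ℝ)) (w : ℝ × ℝ → ℝ)
    (hw : ∀ s ∈ S, 0 < w s)
    (hcov : ∀ p ∈ P, ∃ s ∈ S, p ∈ Set.Icc s.1 s.2) :
    ∃ Sstar ⊆ S,
      -- `Sstar` covers `P`
      (∀ p ∈ P, ∃ s ∈ Sstar, p ∈ Set.Icc s.1 s.2) ∧
      -- `Sstar` minimizes the maximum weighted membership over points of `P`
      (∀ S' ⊆ S, (∀ p ∈ P, ∃ s ∈ S', p ∈ Set.Icc s.1 s.2) →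
        sSup ((fun p => ∑ s ∈ Sstar.filter (fun s => p ∈ Set.Icc s.1 s.2), w s) '' P)
          ≤ sSup ((fun p => ∑ s ∈ S'.filter (fun s => p ∈ Set.Icc s.1 s.2), w s) '' P)) ∧
      -- no interval of `Sstar` is dominated by another interval of `Sstar`
      (¬ ∃ s ∈ Sstar, ∃ r ∈ Sstar, r.1 < s.1 ∧ s.2 < r.2) ∧
      -- no point of `ℝ` lies in more than two intervals of `Sstar`
      (∀ p : ℝ, (Sstar.filter (fun s => p ∈ Set.Icc s.1 s.2)).card ≤ 2) := by
  obtain ⟨T, hT, hT_opt⟩ := (S.powerset.filter (CoversPoints P)).exists_min_image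
    (maxMembership P w) ⟨S, mem_filter.2 ⟨mem_powerset_self S, hcov⟩⟩
  rw [mem_filter, mem_powerset] at hT
  obtain ⟨U, hUT, hU⟩ := exists_minimal_le_of_wellFoundedLT (CoversPoints P) T hT.2
  refine ⟨U, hUT.trans hT.1, hU.prop, fun S' hS' hS'cov => ?_,
    not_dominated_of_minimal hU, card_filter_mem_Icc_le_two_of_minimal hU⟩
  calc maxMembership P w U
      ≤ maxMembership P w T := maxMembership_mono P hUT fun s hs => (hw s (hT.1 hs)).le
    _ ≤ maxMembership P w S' := hT_opt S' (mem_filter.2 ⟨mem_powerset.2 hS', hS'cov⟩)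

/-- Among the covers of a finite point set `P` by weighted closed
intervals from `S` that minimize the maximum weighted membership over `P`, there
is one which is domination-free and in which every point of `ℝ` lies in at most
two intervals. Intervals are encoded by their endpoint pairs `s = (s.1, s.2)`
with `s.1 ≤ s.2`, and the interval is `Set.Icc s.1 s.2`. -/
theorem stmt7 (P : Finset ℝ) (S : Finset (ℝ × ℝ)) (w : ℝ × ℝ → ℝ)
    (hint : ∀ s ∈ S, s.1 ≤ s.2)
    (hw : ∀ s ∈ S, 0 < w s)
    (hcov : ∀ p ∈ P, ∃ s ∈ S, p ∈ Set.Icc s.1 s.2) :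
    ∃ Sstar ⊆ S,
      -- `Sstar` covers `P`
      (∀ p ∈ P, ∃ s ∈ Sstar, p ∈ Set.Icc s.1 s.2) ∧
      -- `Sstar` minimizes the maximum weighted membership over points of `P`
      (∀ S' ⊆ S, (∀ p ∈ P, ∃ s ∈ S', p ∈ Set.Icc s.1 s.2) →
        sSup ((fun p => ∑ s ∈ Sstar.filter (fun s => p ∈ Set.Icc s.1 s.2), w s) '' P)
          ≤ sSup ((fun p => ∑ s ∈ S'.filter (fun s => p ∈ Set.Icc s.1 s.2), w s) '' P)) ∧
      -- no interval of `Sstar` is dominated by another interval of `Sstar`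
      (¬ ∃ s ∈ Sstar, ∃ r ∈ Sstar, r.1 < s.1 ∧ s.2 < r.2) ∧
      -- no point of `ℝ` lies in more than two intervals of `Sstar`
      (∀ p : ℝ, (Sstar.filter (fun s => p ∈ Set.Icc s.1 s.2)).card ≤ 2) :=
  stmt7_general P S w hw hcov
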